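/- arXiv:1511.05172 — 8 statements merged into one kernel-verified Lean document; each statement's English description precedes it below -/
import Mathlib

section
/- For all u>0 and all λ > max(2(u−1), 0), ∫_λ^∞ x^{u−1} e^{−x} dx ≤ 2 λ^{u−1} e^{−λ}. Equivalently, if ξ has distribution Gamma(u,v) with u,v>0, then P(ξ ≥ λ/v) ≤ 2 λ^{u−1} e^{−λ}/Γ(u) for all λ > max(2(u−1),0). -/
/-!
For `x ≥ l ≥ 2(u - 1)`, `l > 0`, the function `x ↦ x^(u-1) e^{-x/2}` is maximal at `x = l`, so on
`(l, ∞)` the Gamma integrand `x^(u-1) e^{-x}` is dominated by `l^(u-1) e^{-l/2} e^{-x/2}`, whose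
integral is `2 l^(u-1) e^{-l}`. The Gamma tail reduces to this integral by the substitution `y = v x`.
-/

open MeasureTheory ProbabilityTheory Real Set

lemma mul_log_div_le_mul_sub {s c a x : ℝ} (hc : 0 ≤ c) (ha : 0 < a) (hs : s ≤ c * a)
    (hax : a ≤ x) : s * log (x / a) ≤ c * (x - a) := by
  rcases le_or_gt s 0 with hs0 | hs0
  · have : 0 ≤ log (x / a) := log_nonneg ((one_le_div ha).2 hax)
    nlinarith
  · calc s * log (x / a) ≤ s * (x / a - 1) :=
          mul_le_mul_of_nonneg_left (log_le_sub_one_of_pos (div_pos (ha.trans_le hax) ha)) hs0.le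
      _ = s / a * (x - a) := by field_simp
      _ ≤ c * (x - a) :=
          mul_le_mul_of_nonneg_right ((div_le_iff₀ ha).2 hs) (sub_nonneg.2 hax)

lemma rpow_mul_exp_neg_mul_le {s c a x : ℝ} (hc : 0 ≤ c) (ha : 0 < a) (hs : s ≤ c * a)
    (hax : a ≤ x) : x ^ s * exp (-(c * x)) ≤ a ^ s * exp (-(c * a)) := by
  have hx : 0 < x := ha.trans_le hax
  calc x ^ s * exp (-(c * x)) = a ^ s * exp (s * log (x / a) - c * x) := by
        rw [rpow_def_of_pos hx, rpow_def_of_pos ha, log_div hx.ne' ha.ne', ← exp_add, ← exp_add]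
        ring_nf
    _ ≤ a ^ s * exp (-(c * a)) := by
        gcongr
        linarith [mul_log_div_le_mul_sub hc ha hs hax]

lemma integral_Ioi_rpow_mul_exp_neg_le {s c l : ℝ} (hc₀ : 0 ≤ c) (hc₁ : c < 1) (hl : 0 < l)
    (hs : s ≤ c * l) :
    ∫ x in Ioi l, x ^ s * exp (-x) ≤ l ^ s * exp (-l) / (1 - c) := by
  have hdecay : c - 1 < 0 := by linarith
  have hdom : ∀ x ∈ Ioi l, x ^ s * exp (-x) ≤ l ^ s * exp (-(c * l)) * exp ((c - 1) * x) := by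
    intro x hx
    calc x ^ s * exp (-x) = x ^ s * exp (-(c * x)) * exp ((c - 1) * x) := by
          rw [mul_assoc, ← exp_add]; ring_nf
      _ ≤ l ^ s * exp (-(c * l)) * exp ((c - 1) * x) :=
          mul_le_mul_of_nonneg_right (rpow_mul_exp_neg_mul_le hc₀ hl hs hx.out.le)
            (exp_pos _).le
  calc ∫ x in Ioi l, x ^ s * exp (-x)
      ≤ ∫ x in Ioi l, l ^ s * exp (-(c * l)) * exp ((c - 1) * x) :=
        setIntegral_mono_of_nonneg (fun x hx => by have : 0 < x := hl.trans hx; positivity) hdom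
          ((integrableOn_exp_mul_Ioi hdecay l).const_mul _)
    _ = l ^ s * exp (-l) / (1 - c) := by
        have hexp : exp (-(c * l)) * exp ((c - 1) * l) = exp (-l) := by rw [← exp_add]; ring_nf
        rw [integral_const_mul, integral_exp_mul_Ioi hdecay, ← hexp, neg_div, ← div_neg,
          neg_sub]
        ring

lemma gammaPDFReal_eq_mul_rpow_mul_exp {a r x : ℝ} (hr : 0 < r) (hx : 0 ≤ x) :
    gammaPDFReal a r x = r / Gamma a * ((r * x) ^ (a - 1) * exp (-(r * x))) := by
  rw [gammaPDFReal, if_pos hx, mul_rpow hr.le hx, rpow_sub_one hr.ne']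
  field_simp

lemma gammaMeasure_Ici {a r t : ℝ} (ha : 0 < a) (hr : 0 < r) (ht : 0 ≤ t) :
    gammaMeasure a r (Ici t) =
      ENNReal.ofReal ((∫ x in Ioi (r * t), x ^ (a - 1) * exp (-x)) / Gamma a) := by
  set f : ℝ → ℝ := fun y => y ^ (a - 1) * exp (-y)
  have hf : IntegrableOn (fun x => f (r * x)) (Ioi t) := by
    rw [integrableOn_Ioi_comp_mul_left_iff f t hr]
    exact ((GammaIntegral_convergent ha).mono_set (Ioi_subset_Ioi (by positivity))).congr_fun
      (fun x _ => mul_comm _ _) measurableSet_Ioi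
  have hpdf : ∀ x ∈ Ioi t, gammaPDF a r x = ENNReal.ofReal (r / Gamma a * f (r * x)) :=
    fun x hx => congrArg ENNReal.ofReal (gammaPDFReal_eq_mul_rpow_mul_exp hr (ht.trans hx.out.le))
  rw [gammaMeasure, withDensity_apply _ measurableSet_Ici, ← setLIntegral_congr Ioi_ae_eq_Ici,
    setLIntegral_congr_fun measurableSet_Ioi hpdf, ← ofReal_integral_eq_lintegral_ofReal
      (hf.const_mul _) ((ae_restrict_iff' measurableSet_Ioi).2 (ae_of_all _ fun x hx => ?_)),
    integral_const_mul, integral_comp_mul_left_Ioi f t hr, smul_eq_mul]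
  · field_simp
  · have : 0 < r * x := mul_pos hr (ht.trans_lt hx)
    have := Gamma_pos_of_pos ha
    positivity

theorem statement6 (u : ℝ) (hu : 0 < u) (l : ℝ) (hl : max (2 * (u - 1)) 0 < l) :
    (∫ x in Set.Ioi l, x ^ (u - 1) * Real.exp (-x)) ≤ 2 * l ^ (u - 1) * Real.exp (-l) ∧
    ∀ v : ℝ, 0 < v →
      gammaMeasure u v (Set.Ici (l / v)) ≤
        ENNReal.ofReal (2 * l ^ (u - 1) * Real.exp (-l) / Real.Gamma u) := by
  obtain ⟨hul, hl₀⟩ := max_lt_iff.1 hl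
  have htail : (∫ x in Ioi l, x ^ (u - 1) * exp (-x)) ≤ 2 * l ^ (u - 1) * exp (-l) := by
    have := integral_Ioi_rpow_mul_exp_neg_le (s := u - 1) (c := 1 / 2) (by norm_num) (by norm_num)
      hl₀ (by linarith)
    norm_num at this
    linarith
  refine ⟨htail, fun v hv => ?_⟩
  rw [gammaMeasure_Ici hu hv (by positivity), mul_div_cancel₀ _ hv.ne']
  exact ENNReal.ofReal_le_ofReal (div_le_div_of_nonneg_right htail (Gamma_pos_of_pos hu).le)
end

section
/- For all u>0 and all λ ≥ 2, ∫_λ^∞ x^{u−1} e^{−x} dx ≥ (2/3) λ^{u−1} e^{−λ}. Equivalently, if ξ has distribution Gamma(u,v) with u,v>0, then P(ξ ≥ λ/v) ≥ (2/3) λ^{u−1} e^{−λ}/Γ(u) for all λ ≥ 2. -/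
/-!
For `x ≥ l > 0` we have `x ^ (u - 1) ≥ l ^ (u - 1) * (l / x)` (as `x ^ u ≥ l ^ u`) and
`l / x ≥ exp (1 - x / l)` (as `t ≤ exp (t - 1)`). Hence on `(l, ∞)` the Gamma integrand dominates
`l ^ (u - 1) * exp (1 - (1 + 1 / l) * x)`, whose integral is `l / (l + 1) * l ^ (u - 1) * exp (-l)`,
and `l / (l + 1) ≥ 2 / 3` once `l ≥ 2`. The probabilistic form follows by the substitution `y = v x`.
-/

open MeasureTheory ProbabilityTheory Real

open Set

lemma integrableOn_rpow_mul_exp_neg_Ioi {u : ℝ} (hu : 0 < u) {l : ℝ} (hl : 0 ≤ l) :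
    IntegrableOn (fun x ↦ x ^ (u - 1) * exp (-x)) (Ioi l) :=
  ((GammaIntegral_convergent hu).mono_set (Ioi_subset_Ioi hl)).congr_fun
    (fun _ _ ↦ mul_comm _ _) measurableSet_Ioi

lemma rpow_mul_exp_one_mul_exp_le {u l x : ℝ} (hu : 0 ≤ u) (hl : 0 < l) (hlx : l ≤ x) :
    l ^ (u - 1) * exp 1 * exp (-(1 + l⁻¹) * x) ≤ x ^ (u - 1) * exp (-x) := by
  have hx : 0 < x := hl.trans_le hlx
  have h_exp : exp (1 - x / l) ≤ l / x := by
    have : x / l ≤ exp (x / l - 1) := by linarith [add_one_le_exp (x / l - 1)]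
    rw [show 1 - x / l = -(x / l - 1) by ring, exp_neg, ← inv_div x l]
    gcongr
  have h_pow : l ^ (u - 1) * (l / x) ≤ x ^ (u - 1) := by
    rw [rpow_sub_one hl.ne', rpow_sub_one hx.ne', div_mul_div_cancel₀ hl.ne']
    gcongr
  calc l ^ (u - 1) * exp 1 * exp (-(1 + l⁻¹) * x)
      = l ^ (u - 1) * exp (1 - x / l) * exp (-x) := by
        rw [mul_assoc, mul_assoc, ← exp_add, ← exp_add]
        ring_nf
    _ ≤ l ^ (u - 1) * (l / x) * exp (-x) := by gcongr
    _ ≤ x ^ (u - 1) * exp (-x) := by gcongr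

lemma div_add_one_mul_rpow_mul_exp_neg_le_integral_Ioi {u l : ℝ} (hu : 0 < u) (hl : 0 < l) :
    l / (l + 1) * (l ^ (u - 1) * exp (-l)) ≤ ∫ x in Ioi l, x ^ (u - 1) * exp (-x) := by
  have ha : -(1 + l⁻¹) < 0 := by have := inv_pos.2 hl; linarith
  have h_int : ∫ x in Ioi l, l ^ (u - 1) * exp 1 * exp (-(1 + l⁻¹) * x)
      = l / (l + 1) * (l ^ (u - 1) * exp (-l)) := by
    have : exp (-(1 + l⁻¹) * l) = exp (-l) * (exp 1)⁻¹ := by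
      rw [← exp_neg, ← exp_add]; field_simp; ring_nf
    rw [integral_const_mul, integral_exp_mul_Ioi ha, this]
    field_simp
  rw [← h_int]
  exact setIntegral_mono_on ((integrableOn_exp_mul_Ioi ha l).const_mul _)
    (integrableOn_rpow_mul_exp_neg_Ioi hu hl.le) measurableSet_Ioi
    fun x hx ↦ rpow_mul_exp_one_mul_exp_le hu.le hl (le_of_lt hx)

namespace ProbabilityTheory

lemma integrable_gammaPDFReal {a r : ℝ} (ha : 0 < a) (hr : 0 < r) :
    Integrable (gammaPDFReal a r) := by
  have h : ∫⁻ x, gammaPDF a r x ≠ ⊤ := by simp [lintegral_gammaPDF_eq_one ha hr]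
  have := integrable_toReal_of_lintegral_ne_top
    (measurable_gammaPDFReal a r).ennreal_ofReal.aemeasurable h
  simpa [ENNReal.toReal_ofReal (gammaPDFReal_nonneg ha hr _)] using this

lemma gammaPDFReal_of_nonneg_eq_mul_comp_mul {a r x : ℝ} (hr : 0 < r) (hx : 0 ≤ x) :
    gammaPDFReal a r x = r / Gamma a * ((r * x) ^ (a - 1) * exp (-(r * x))) := by
  rw [gammaPDFReal, if_pos hx, mul_rpow hr.le hx, rpow_sub_one hr.ne']
  field_simp

lemma integral_Ioi_div_gammaPDFReal {a r l : ℝ} (hr : 0 < r) (hl : 0 ≤ l) :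
    ∫ x in Ioi (l / r), gammaPDFReal a r x =
      (∫ x in Ioi l, x ^ (a - 1) * exp (-x)) / Gamma a := by
  have hlr : 0 ≤ l / r := div_nonneg hl hr.le
  rw [setIntegral_congr_fun measurableSet_Ioi fun x hx ↦
      gammaPDFReal_of_nonneg_eq_mul_comp_mul hr (hlr.trans (le_of_lt hx)),
    integral_const_mul, integral_comp_mul_left_Ioi (fun y ↦ y ^ (a - 1) * exp (-y)) _ hr,
    mul_div_cancel₀ _ hr.ne', smul_eq_mul]
  field_simp

lemma gammaMeasure_Ici_div {a r l : ℝ} (ha : 0 < a) (hr : 0 < r) (hl : 0 ≤ l) :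
    gammaMeasure a r (Ici (l / r)) =
      ENNReal.ofReal ((∫ x in Ioi l, x ^ (a - 1) * exp (-x)) / Gamma a) := by
  rw [← integral_Ioi_div_gammaPDFReal hr hl, ofReal_integral_eq_lintegral_ofReal
      (integrable_gammaPDFReal ha hr).integrableOn (ae_of_all _ (gammaPDFReal_nonneg ha hr)),
    gammaMeasure, withDensity_apply _ measurableSet_Ici, setLIntegral_congr Ioi_ae_eq_Ici.symm]
  rfl

end ProbabilityTheory

theorem statement7 (u : ℝ) (hu : 0 < u) (l : ℝ) (hl : 2 ≤ l) :
    (2 / 3) * (l ^ (u - 1) * Real.exp (-l)) ≤ ∫ x in Set.Ioi l, x ^ (u - 1) * Real.exp (-x) ∧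
    ∀ v : ℝ, 0 < v →
      ENNReal.ofReal ((2 / 3) * (l ^ (u - 1) * Real.exp (-l)) / Real.Gamma u) ≤
        gammaMeasure u v (Set.Ici (l / v)) := by
  have h_tail : (2 / 3) * (l ^ (u - 1) * exp (-l)) ≤ ∫ x in Ioi l, x ^ (u - 1) * exp (-x) :=
    calc (2 / 3) * (l ^ (u - 1) * exp (-l))
        ≤ l / (l + 1) * (l ^ (u - 1) * exp (-l)) := by
          refine mul_le_mul_of_nonneg_right ?_ (by positivity)
          rw [le_div_iff₀ (by linarith)]
          linarith
      _ ≤ ∫ x in Ioi l, x ^ (u - 1) * exp (-x) :=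
          div_add_one_mul_rpow_mul_exp_neg_le_integral_Ioi hu (by linarith)
  refine ⟨h_tail, fun v hv ↦ ?_⟩
  rw [gammaMeasure_Ici_div hu hv (by linarith)]
  gcongr
end

section
/- Let u,v>0 and let ξ_1,…,ξ_n be independent random variables each with distribution Gamma(u,v). Let ε ∈ (0,1) and q>0, and suppose n ≥ 10, (1−ε)·log n ≥ 2, and n^ε ≥ (3/2)·q·Γ(u)·log n. Then P( max_{1≤i≤n} ξ_i ≥ (1−ε)(log n)/v ) ≥ 1 − e^{−q}. -/
/-!
Put `c = max (1 - u) 0`. For `x ≥ t > 0` the bound `log (x / t) ≤ x / t - 1` gives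
`x ^ (u - 1) ≥ t ^ (u - 1) * exp (c * (1 - x / t))`, so on `(t, ∞)` the Gamma density dominates
an exponential one, and integrating yields `P(ξ ≥ t) ≥ s ^ u * exp (-s) / ((s + c) * Γ(u))`
with `s = v t`. At `s = (1 - ε) log n` the hypotheses make this at least `q / n`, hence
`P(max ξ_i < t) ≤ (1 - q / n) ^ n ≤ exp (-q)` by independence.
-/

open MeasureTheory ProbabilityTheory Real Set

noncomputable def gammaTailBound (u s : ℝ) : ℝ :=
  s ^ u * exp (-s) / ((s + max (1 - u) 0) * Gamma u)

lemma rpow_sub_one_mul_exp_le_rpow {t x : ℝ} (u : ℝ) (ht : 0 < t) (htx : t ≤ x) :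
    t ^ (u - 1) * exp (max (1 - u) 0 * (1 - x / t)) ≤ x ^ (u - 1) := by
  rcases le_or_gt 1 u with hu | hu
  · rw [max_eq_right (by linarith), zero_mul, exp_zero, mul_one]
    exact rpow_le_rpow ht.le htx (by linarith)
  · have hx : 0 < x := ht.trans_le htx
    have hlog : log x - log t ≤ x / t - 1 := by
      rw [← log_div hx.ne' ht.ne']
      exact log_le_sub_one_of_pos (by positivity)
    rw [max_eq_left (by linarith), rpow_def_of_pos ht, rpow_def_of_pos hx, ← exp_add,
      exp_le_exp]
    nlinarith [mul_le_mul_of_nonneg_left hlog (by linarith : 0 ≤ 1 - u)]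

theorem ofReal_gammaTailBound_le_gammaMeasure_Ici {u v t : ℝ} (hu : 0 < u) (hv : 0 < v)
    (ht : 0 < t) :
    ENNReal.ofReal (gammaTailBound u (v * t)) ≤ gammaMeasure u v (Ici t) := by
  set c := max (1 - u) 0
  set b := v + c / t
  set K := v ^ u / Gamma u * t ^ (u - 1) * exp c
  have hΓ : 0 < Gamma u := Gamma_pos_of_pos hu
  have hb : 0 < b := by positivity
  have hdom : ∀ x ∈ Ioi t, K * exp (-b * x) ≤ gammaPDFReal u v x := by
    intro x hx
    have hexp : exp c * exp (-b * x) = exp (c * (1 - x / t)) * exp (-(v * x)) := by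
      rw [← exp_add, ← exp_add]
      simp only [b]
      ring_nf
    rw [gammaPDFReal, if_pos (ht.trans hx).le]
    calc K * exp (-b * x)
        = v ^ u / Gamma u * t ^ (u - 1) * (exp c * exp (-b * x)) := by ring
      _ = v ^ u / Gamma u * (t ^ (u - 1) * exp (c * (1 - x / t))) * exp (-(v * x)) := by
          rw [hexp]; ring
      _ ≤ v ^ u / Gamma u * x ^ (u - 1) * exp (-(v * x)) := by
          gcongr
          exact rpow_sub_one_mul_exp_le_rpow u ht (le_of_lt hx)
  have hintegral : ∫ x in Ioi t, K * exp (-b * x) = gammaTailBound u (v * t) := by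
    have hexp : exp c * exp (-b * t) = exp (-(v * t)) := by
      rw [← exp_add]
      congr 1
      simp only [b]
      field_simp
      ring
    rw [integral_const_mul, integral_exp_mul_Ioi (by linarith), gammaTailBound,
      mul_rpow hv.le ht.le, ← hexp]
    simp only [K, b, c]
    rw [rpow_sub_one ht.ne']
    field_simp
  have hint : IntegrableOn (fun x => K * exp (-b * x)) (Ioi t) :=
    ((exp_neg_integrableOn_Ioi t hb).congr_fun (fun x _ => by ring_nf)
      measurableSet_Ioi).const_mul K
  calc ENNReal.ofReal (gammaTailBound u (v * t))
      = ∫⁻ x in Ioi t, ENNReal.ofReal (K * exp (-b * x)) := by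
        rw [← hintegral,
          ofReal_integral_eq_lintegral_ofReal hint (ae_of_all _ fun x => by positivity)]
    _ ≤ ∫⁻ x in Ioi t, gammaPDF u v x :=
        setLIntegral_mono (measurable_gammaPDFReal u v).ennreal_ofReal
          fun x hx => ENNReal.ofReal_le_ofReal (hdom x hx)
    _ ≤ ∫⁻ x in Ici t, gammaPDF u v x := lintegral_mono_set Ioi_subset_Ici_self
    _ = gammaMeasure u v (Ici t) := by rw [gammaMeasure, withDensity_apply _ measurableSet_Ici]

lemma div_le_gammaTailBound_log {u ε q x : ℝ} (hu : 0 < u) (hε : ε ∈ Ioo (0 : ℝ) 1)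
    (hq : 0 ≤ q) (hx : 0 < x) (hlog : 2 ≤ (1 - ε) * log x)
    (hbig : (3 / 2) * q * Gamma u * log x ≤ x ^ ε) :
    q / x ≤ gammaTailBound u ((1 - ε) * log x) := by
  obtain ⟨hε0, hε1⟩ := hε
  set L := log x
  set s := (1 - ε) * L
  set c := max (1 - u) 0
  have hL : s ≤ L := by nlinarith
  have hc : c ≤ 1 := max_le (by linarith) zero_le_one
  have hΓ : 0 < Gamma u := Gamma_pos_of_pos hu
  have hsu : 1 ≤ s ^ u := one_le_rpow (by linarith) hu.le
  have hxε : x ^ ε = exp (-s) * x := by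
    rw [rpow_def_of_pos hx, ← exp_log hx, ← exp_add, exp_log hx]
    simp only [s, L]
    ring_nf
  have hsc : q * Gamma u * (s + c) ≤ q * Gamma u * ((3 / 2) * L) := by
    gcongr
    linarith
  rw [gammaTailBound, div_le_div_iff₀ hx (by positivity)]
  nlinarith [mul_le_mul_of_nonneg_left hsu (by positivity : 0 ≤ exp (-s) * x)]

lemma ENNReal.one_sub_ofReal_le_ofReal_exp_neg {x : ℝ} (hx : 0 ≤ x) :
    1 - ENNReal.ofReal x ≤ ENNReal.ofReal (exp (-x)) := by
  rw [tsub_le_iff_right, ← ENNReal.ofReal_add (exp_pos _).le hx, ← ENNReal.ofReal_one]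
  exact ENNReal.ofReal_le_ofReal (by linarith [add_one_le_exp (-x)])

namespace ProbabilityTheory.iIndepFun

variable {Ω ι : Type*} [MeasurableSpace Ω] {P : Measure Ω} [Fintype ι] {ξ : ι → Ω → ℝ}
  {μ : Measure ℝ} [IsProbabilityMeasure μ]

lemma measure_forall_lt_eq_pow (hind : iIndepFun ξ P) (hlaw : ∀ i, P.map (ξ i) = μ)
    (t : ℝ) : P {ω | ∀ i, ξ i ω < t} = μ (Iio t) ^ Fintype.card ι := by
  have hlaw_Iio : ∀ i, P (ξ i ⁻¹' Iio t) = μ (Iio t) := fun i => by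
    have hmeas : AEMeasurable (ξ i) P :=
      aemeasurable_of_map_neZero (by rw [hlaw i]; infer_instance)
    rw [← Measure.map_apply_of_aemeasurable hmeas measurableSet_Iio, hlaw i]
  have hset : {ω | ∀ i, ξ i ω < t} = ⋂ i, ξ i ⁻¹' Iio t := by ext; simp
  rw [hset, hind.meas_iInter fun _ => ⟨Iio t, measurableSet_Iio, rfl⟩]
  simp only [hlaw_Iio, Finset.prod_const, Finset.card_univ]

theorem ofReal_one_sub_exp_neg_le_measure_exists_le [IsProbabilityMeasure P] [Nonempty ι]
    (hind : iIndepFun ξ P) (hlaw : ∀ i, P.map (ξ i) = μ) {q t : ℝ} (hq : 0 ≤ q)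
    (htail : ENNReal.ofReal (q / Fintype.card ι) ≤ μ (Ici t)) :
    ENNReal.ofReal (1 - exp (-q)) ≤ P {ω | ∃ i, t ≤ ξ i ω} := by
  set n := Fintype.card ι
  have hn : (n : ℝ) ≠ 0 := Nat.cast_ne_zero.mpr Fintype.card_ne_zero
  have hIio : μ (Iio t) ≤ ENNReal.ofReal (exp (-(q / n))) := by
    rw [← compl_Ici, prob_compl_eq_one_sub measurableSet_Ici]
    exact (tsub_le_tsub_left htail 1).trans
      (ENNReal.one_sub_ofReal_le_ofReal_exp_neg (by positivity))
  have hcompl : P {ω | ∃ i, t ≤ ξ i ω}ᶜ ≤ ENNReal.ofReal (exp (-q)) := by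
    have hset : {ω | ∃ i, t ≤ ξ i ω}ᶜ = {ω | ∀ i, ξ i ω < t} := by ext; simp
    have hpow : exp (-(q / n)) ^ n = exp (-q) := by
      rw [← exp_nat_mul]
      field_simp
    rw [hset, hind.measure_forall_lt_eq_pow hlaw, ← hpow, ENNReal.ofReal_pow (exp_pos _).le]
    gcongr
  have hsplit : 1 ≤ P {ω | ∃ i, t ≤ ξ i ω} + P {ω | ∃ i, t ≤ ξ i ω}ᶜ := by
    rw [← measure_univ (μ := P), ← union_compl_self {ω | ∃ i, t ≤ ξ i ω}]
    exact measure_union_le _ _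
  rw [ENNReal.ofReal_sub _ (exp_pos _).le, ENNReal.ofReal_one]
  exact (tsub_le_tsub_left hcompl 1).trans (tsub_le_iff_right.mpr hsplit)

end ProbabilityTheory.iIndepFun

theorem statement8_general {Ω : Type*} [MeasureSpace Ω] [IsProbabilityMeasure (ℙ : Measure Ω)]
    (u v : ℝ) (hu : 0 < u) (hv : 0 < v) (n : ℕ)
    (ξ : Fin n → Ω → ℝ)
    (hind : iIndepFun ξ (ℙ : Measure Ω))
    (hgamma : ∀ i, Measure.map (ξ i) (ℙ : Measure Ω) = gammaMeasure u v)
    (ε q : ℝ) (hε : ε ∈ Set.Ioo (0 : ℝ) 1) (hq : 0 < q)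
    (hlog : 2 ≤ (1 - ε) * Real.log n)
    (hbig : (3 / 2) * q * Real.Gamma u * Real.log n ≤ (n : ℝ) ^ ε) :
    ENNReal.ofReal (1 - Real.exp (-q)) ≤
      ℙ {ω | ∃ i, (1 - ε) * Real.log n / v ≤ ξ i ω} := by
  have := isProbabilityMeasure_gammaMeasure hu hv
  have hn0 : 0 < n := Nat.pos_of_ne_zero (by rintro rfl; norm_num at hlog)
  have : Nonempty (Fin n) := ⟨⟨0, hn0⟩⟩
  have hs : 0 < (1 - ε) * log n := by linarith
  refine hind.ofReal_one_sub_exp_neg_le_measure_exists_le hgamma hq.le ?_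
  calc ENNReal.ofReal (q / Fintype.card (Fin n))
      ≤ ENNReal.ofReal (gammaTailBound u (v * ((1 - ε) * log n / v))) := by
        rw [Fintype.card_fin, mul_div_cancel₀ _ hv.ne']
        exact ENNReal.ofReal_le_ofReal
          (div_le_gammaTailBound_log hu hε hq.le (by exact_mod_cast hn0) hlog hbig)
    _ ≤ gammaMeasure u v (Ici ((1 - ε) * log n / v)) :=
        ofReal_gammaTailBound_le_gammaMeasure_Ici hu hv (div_pos hs hv)

theorem statement8 {Ω : Type*} [MeasureSpace Ω] [IsProbabilityMeasure (ℙ : Measure Ω)]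
    (u v : ℝ) (hu : 0 < u) (hv : 0 < v) (n : ℕ)
    (ξ : Fin n → Ω → ℝ)
    (hind : iIndepFun ξ (ℙ : Measure Ω))
    (hgamma : ∀ i, Measure.map (ξ i) (ℙ : Measure Ω) = gammaMeasure u v)
    (ε q : ℝ) (hε : ε ∈ Set.Ioo (0 : ℝ) 1) (hq : 0 < q)
    (hn : 10 ≤ n) (hlog : 2 ≤ (1 - ε) * Real.log n)
    (hbig : (3 / 2) * q * Real.Gamma u * Real.log n ≤ (n : ℝ) ^ ε) :
    ENNReal.ofReal (1 - Real.exp (-q)) ≤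
      ℙ {ω | ∃ i, (1 - ε) * Real.log n / v ≤ ξ i ω} :=
  statement8_general u v hu hv n ξ hind hgamma ε q hε hq hlog hbig
end

section
/- Let n ≥ 2 and let A be an n×n nonsingular M-matrix such that every row sum of A is positive. Set K = A⁻¹ and assume K_{ii} ≥ max_{j≠i} K_{ji} for every i. Then for every i, A_{ii} · ( K_{ii} − max_{j≠i} K_{ji} ) ≤ 1. -/
/-- An `n × n` real matrix is a nonsingular M-matrix if its off-diagonal entries are
nonpositive, it is invertible, and all entries of its inverse are nonnegative. -/
def IsNonsingMMatrix {n : ℕ} (A : Matrix (Fin n) (Fin n) ℝ) : Prop :=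
  (∀ i j, i ≠ j → A i j ≤ 0) ∧ IsUnit A.det ∧ ∀ i j, 0 ≤ A⁻¹ i j

theorem statement13 {n : ℕ} (hn : 2 ≤ n)
    (A : Matrix (Fin n) (Fin n) ℝ) (hA : IsNonsingMMatrix A)
    (hrow : ∀ i, 0 < ∑ j, A i j)
    (K : Matrix (Fin n) (Fin n) ℝ) (hK : K = A⁻¹)
    (hdiag : ∀ i, (⨆ j : {j : Fin n // j ≠ i}, K j.1 i) ≤ K i i) :
    ∀ i, A i i * (K i i - ⨆ j : {j : Fin n // j ≠ i}, K j.1 i) ≤ 1 := by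
  obtain ⟨hoff, hunit, hinv⟩ := hA
  intro i
  have hAK : A * A⁻¹ = 1 := Matrix.mul_nonsing_inv A hunit
  have hinvK : ∀ p q, 0 ≤ K p q := by intro p q; rw [hK]; exact hinv p q
  have hAK' : A * K = 1 := by rw [hK]; exact hAK
  -- nonempty index type of j ≠ i
  have hnt : Nontrivial (Fin n) := Fin.nontrivial_iff_two_le.mpr hn
  obtain ⟨j0, hj0⟩ := exists_ne i
  have hne : Nonempty {j : Fin n // j ≠ i} := ⟨⟨j0, hj0⟩⟩
  set m : ℝ := ⨆ j : {j : Fin n // j ≠ i}, K j.1 i with hm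
  have hbdd : BddAbove (Set.range fun j : {j : Fin n // j ≠ i} => K j.1 i) :=
    Set.Finite.bddAbove (Set.finite_range _)
  have hle_m : ∀ j : Fin n, j ≠ i → K j i ≤ m := fun j hj => le_ciSup hbdd ⟨j, hj⟩
  have hm0 : 0 ≤ m := le_trans (hinvK j0 i) (hle_m j0 hj0)
  -- (A*K) i i = 1
  have hsum : ∑ j, A i j * K j i = 1 := by
    have := congrFun (congrFun hAK' i) i
    simpa [Matrix.mul_apply, Matrix.one_apply] using this
  have hsplit : A i i * K i i + ∑ j ∈ Finset.univ.erase i, A i j * K j i = 1 := by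
    exact (Finset.add_sum_erase Finset.univ (fun j => A i j * K j i) (Finset.mem_univ i)).trans hsum
  have hrowsplit : A i i + ∑ j ∈ Finset.univ.erase i, A i j = ∑ j, A i j := by
    exact Finset.add_sum_erase Finset.univ (fun j => A i j) (Finset.mem_univ i)
  -- - S ≤ (∑ -A i j) * m
  have hS : -(∑ j ∈ Finset.univ.erase i, A i j * K j i)
      ≤ (-(∑ j ∈ Finset.univ.erase i, A i j)) * m := by
    rw [← Finset.sum_neg_distrib, ← Finset.sum_neg_distrib, Finset.sum_mul]
    apply Finset.sum_le_sum
    intro j hj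
    have hji : j ≠ i := Finset.ne_of_mem_erase hj
    have hAij : A i j ≤ 0 := hoff i j (Ne.symm hji)
    have hKle : K j i ≤ m := hle_m j hji
    have := mul_le_mul_of_nonneg_left hKle (neg_nonneg.mpr hAij)
    nlinarith
  have hT : -(∑ j ∈ Finset.univ.erase i, A i j) ≤ A i i := by
    have := hrow i
    linarith
  have hTm : (-(∑ j ∈ Finset.univ.erase i, A i j)) * m ≤ A i i * m :=
    mul_le_mul_of_nonneg_right hT hm0
  have expand : A i i * (K i i - m) = A i i * K i i - A i i * m := by ring
  linarith
end

section
/- Let n ≥ 2 and let A be an n×n nonsingular M-matrix with positive row sums, set K = A⁻¹, and assume K_{ii} ≥ max_{j≠i} K_{ji} for every i. Assume additionally that K is constant along the diagonal (K_{ii} = K_{jj} for all i,j), and let σ²_{ij} = K_{ii} + K_{jj} − (K_{ij} + K_{ji}) and (σ*_n)² = min_{i≠j} σ²_{ij}. If there is a constant C < 1 with |K_{ij} − K_{ji}| ≤ C·σ²_{ij} for all i≠j, then for every i, (1−C)·(σ*_n)²·A_{ii} ≤ 2. -/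
theorem statement14 {n : ℕ} (hn : 2 ≤ n)
    (A : Matrix (Fin n) (Fin n) ℝ) (hA : IsNonsingMMatrix A)
    (hrow : ∀ i, 0 < ∑ j, A i j)
    (K : Matrix (Fin n) (Fin n) ℝ) (hK : K = A⁻¹)
    (hdiag : ∀ i, (⨆ j : {j : Fin n // j ≠ i}, K j.1 i) ≤ K i i)
    (hconst : ∀ i j, K i i = K j j)
    (σ2 : Fin n → Fin n → ℝ)
    (hσ2 : ∀ i j, σ2 i j = K i i + K j j - (K i j + K j i))
    (σstar : ℝ)
    (hσstar : σstar = ⨅ q : {q : Fin n × Fin n // q.1 ≠ q.2}, σ2 q.1.1 q.1.2)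
    (C : ℝ) (hC : C < 1)
    (hskew : ∀ i j, i ≠ j → |K i j - K j i| ≤ C * σ2 i j) :
    ∀ i, (1 - C) * σstar * A i i ≤ 2 := by
  have hKnn : ∀ a b, 0 ≤ K a b := by rw [hK]; exact hA.2.2
  have hAK : A * K = 1 := by rw [hK]; exact Matrix.mul_nonsing_inv A hA.2.1
  have hKle : ∀ a b : Fin n, a ≠ b → K a b ≤ K b b := by
    intro a b hab
    refine le_trans ?_ (hdiag b)
    exact le_ciSup (f := fun j : {j : Fin n // j ≠ b} => K j.1 b) (Finite.bddAbove_range _) ⟨a, hab⟩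
  have hC0 : 0 < 1 - C := by linarith
  intro i
  have hinf : ∀ a b, a ≠ b → σstar ≤ σ2 a b := by
    intro a b hab
    rw [hσstar]
    exact ciInf_le (Finite.bddBelow_range _) (⟨(a, b), hab⟩ : {q : Fin n × Fin n // q.1 ≠ q.2})
  -- pick an element different from i
  have hnt : Nontrivial (Fin n) := Fin.nontrivial_iff_two_le.mpr hn
  obtain ⟨j0, hj0⟩ := exists_ne i
  set s : Finset (Fin n) := Finset.univ.erase i with hs_def
  have hs : s.Nonempty := ⟨j0, Finset.mem_erase.mpr ⟨hj0, Finset.mem_univ j0⟩⟩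
  obtain ⟨j, hjmem, hjmax⟩ := Finset.exists_max_image s (fun k => K k i) hs
  have hji : j ≠ i := (Finset.mem_erase.mp hjmem).1
  -- the key identity from (A*K) i i = 1
  have hsum : A i i * K i i + ∑ k ∈ s, A i k * K k i = 1 := by
    have h1 : (A * K) i i = 1 := by rw [hAK]; simp [Matrix.one_apply]
    rw [Matrix.mul_apply] at h1
    rw [← h1]
    exact Finset.add_sum_erase _ (fun k => A i k * K k i) (Finset.mem_univ i)
  -- the off-diagonal part is nonpositive
  have hoff : ∑ k ∈ s, A i k * K k i ≤ 0 := by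
    apply Finset.sum_nonpos
    intro k hk
    have hk' : k ≠ i := (Finset.mem_erase.mp hk).1
    exact mul_nonpos_of_nonpos_of_nonneg (hA.1 i k (Ne.symm hk')) (hKnn k i)
  have hAiiKii : 1 ≤ A i i * K i i := by linarith
  have hAii : 0 < A i i := by nlinarith [hKnn i i]
  -- lower bound on the off-diagonal sum
  have hb1 : (∑ k ∈ s, A i k) * K j i ≤ ∑ k ∈ s, A i k * K k i := by
    rw [Finset.sum_mul]
    apply Finset.sum_le_sum
    intro k hk
    have hk' : k ≠ i := (Finset.mem_erase.mp hk).1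
    have hAik : A i k ≤ 0 := hA.1 i k (Ne.symm hk')
    have hmax := hjmax k hk
    nlinarith
  have hrows : ∑ k ∈ s, A i k = (∑ k, A i k) - A i i := by
    rw [← Finset.add_sum_erase Finset.univ (A i) (Finset.mem_univ i)]; ring
  have hb2 : (-(A i i)) * K j i ≤ (∑ k ∈ s, A i k) * K j i := by
    apply mul_le_mul_of_nonneg_right _ (hKnn j i)
    rw [hrows]
    have := hrow i
    linarith
  -- main inequality: A i i * (K i i - K j i) ≤ 1
  have hkey : A i i * (K i i - K j i) ≤ 1 := by nlinarith
  -- (1-C) * σstar ≤ 2 * (K i i - K j i)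
  have habs := hskew i j (Ne.symm hji)
  have hdd : K j j = K i i := hconst j i
  have habs' : K j i - K i j ≤ |K i j - K j i| := by
    rw [abs_sub_comm]; exact le_abs_self _
  have hσ := hσ2 i j
  have h2t : (1 - C) * σ2 i j ≤ 2 * (K i i - K j i) := by
    have : C * σ2 i j ≥ K j i - K i j := le_trans habs' habs
    nlinarith
  have hfin : (1 - C) * σstar ≤ 2 * (K i i - K j i) := by
    have := hinf i j (Ne.symm hji)
    nlinarith
  nlinarith [mul_le_mul_of_nonneg_right hfin hAii.le]
end

section
/- Let R : (0,∞) → [0,∞) be nonincreasing. Then for every z > 0, ∫_0^∞ (1 − cos(λz))·R(λ) dλ ≥ (1/2)·∫_{π/(2z)}^∞ R(λ) dλ, where both sides are Lebesgue integrals with values in [0,∞]. -/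
/-!
Put `c = π / (2z)`, `h = π / z` and let `S` be the set of `λ > c` with `cos (λ z) ≤ 0`.
Translating by the half period `h` flips the sign of `cos (λ z)`, so `S` and `S + h` cover
`(c, ∞)`; since `R` is nonincreasing, `∫_{S + h} R ≤ ∫_S R`, whence
`∫_{(c, ∞)} R ≤ 2 ∫_S R`.
On `S` the weight `1 - cos (λ z)` is at least `1`.
-/

open MeasureTheory Real ENNReal

theorem setLIntegral_le_two_mul_of_subset_union_preimage_sub {G : Type*}
    [MeasurableSpace G] [AddGroup G] [MeasurableAdd G] {μ : Measure G} [μ.IsAddRightInvariant]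
    {f : G → ℝ≥0∞} {S T : Set G} {h : G} (hS : MeasurableSet S)
    (hT : T ⊆ S ∪ (· - h) ⁻¹' S) (hf : ∀ x ∈ S, f (x + h) ≤ f x) :
    ∫⁻ x in T, f x ∂μ ≤ 2 * ∫⁻ x in S, f x ∂μ := by
  have htranslate : ∫⁻ x in (· - h) ⁻¹' S, f x ∂μ = ∫⁻ x in S, f (x + h) ∂μ := by
    simpa only [sub_add_cancel] using
      (measurePreserving_sub_right μ h).setLIntegral_comp_preimage_emb
        (measurableEmbedding_subRight h) (fun x => f (x + h)) S
  calc ∫⁻ x in T, f x ∂μ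
      ≤ ∫⁻ x in S ∪ (· - h) ⁻¹' S, f x ∂μ := lintegral_mono_set hT
    _ ≤ ∫⁻ x in S, f x ∂μ + ∫⁻ x in (· - h) ⁻¹' S, f x ∂μ :=
      lintegral_union_le _ _ _
    _ ≤ ∫⁻ x in S, f x ∂μ + ∫⁻ x in S, f x ∂μ := by
      rw [htranslate]
      exact add_le_add_right (setLIntegral_mono' hS hf) _
    _ = 2 * ∫⁻ x in S, f x ∂μ := (two_mul _).symm

def cosNonposAbove (z : ℝ) : Set ℝ := {x | π / (2 * z) < x ∧ cos (x * z) ≤ 0}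

theorem measurableSet_cosNonposAbove (z : ℝ) : MeasurableSet (cosNonposAbove z) :=
  measurableSet_Ioi.inter
    (measurableSet_le (f := fun x => cos (x * z)) (by fun_prop) measurable_const)

theorem cosNonposAbove_subset_Ioi {z : ℝ} (hz : 0 < z) : cosNonposAbove z ⊆ Set.Ioi 0 :=
  fun _ hx => (div_pos pi_pos (by positivity)).trans hx.1

theorem Ioi_subset_cosNonposAbove_union_preimage_sub {z : ℝ} (hz : 0 < z) :
    Set.Ioi (π / (2 * z)) ⊆ cosNonposAbove z ∪ (· - π / z) ⁻¹' cosNonposAbove z := by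
  intro x (hx : π / (2 * z) < x)
  by_cases hcos : cos (x * z) ≤ 0
  · exact Or.inl ⟨hx, hcos⟩
  have hshift : (x - π / z) * z = x * z - π := by field_simp
  refine Or.inr ⟨?_, show cos ((x - π / z) * z) ≤ 0 by rw [hshift, cos_sub_pi]; linarith⟩
  by_contra! hle
  refine hcos (cos_nonpos_of_pi_div_two_le_of_le ?_ ?_)
  · calc π / 2 = π / (2 * z) * z := by field_simp
      _ ≤ x * z := by gcongr
  · calc x * z = (x - π / z) * z + π := by rw [hshift]; ring
      _ ≤ π / (2 * z) * z + π := by gcongr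
      _ = π + π / 2 := by field_simp; ring

theorem ofReal_le_ofReal_one_sub_cos_mul {z x r : ℝ} (hx : x ∈ cosNonposAbove z) :
    ENNReal.ofReal r ≤ ENNReal.ofReal ((1 - cos (x * z)) * r) := by
  rw [ofReal_mul (by linarith [cos_le_one (x * z)])]
  exact le_mul_of_one_le_left' (by rw [← ofReal_one]; exact ofReal_le_ofReal (by linarith [hx.2]))

theorem statement17_general (R : ℝ → ℝ)
    (hRanti : AntitoneOn R (Set.Ioi 0)) (z : ℝ) (hz : 0 < z) :
    (1 / 2) * ∫⁻ l in Set.Ioi (Real.pi / (2 * z)), ENNReal.ofReal (R l) ≤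
      ∫⁻ l in Set.Ioi (0 : ℝ), ENNReal.ofReal ((1 - Real.cos (l * z)) * R l) := by
  set S := cosNonposAbove z
  have hS_pos := cosNonposAbove_subset_Ioi hz
  have hR_shift : ∀ x ∈ S, ENNReal.ofReal (R (x + π / z)) ≤ ENNReal.ofReal (R x) := by
    intro x hx
    have hx_pos : 0 < x := hS_pos hx
    have hshift_pos : 0 < π / z := by positivity
    exact ofReal_le_ofReal <| hRanti hx_pos (by simp only [Set.mem_Ioi]; linarith) (by linarith)
  calc (1 / 2) * ∫⁻ l in Set.Ioi (π / (2 * z)), ENNReal.ofReal (R l)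
      ≤ (1 / 2) * (2 * ∫⁻ l in S, ENNReal.ofReal (R l)) := by
        gcongr
        exact setLIntegral_le_two_mul_of_subset_union_preimage_sub (measurableSet_cosNonposAbove z)
          (Ioi_subset_cosNonposAbove_union_preimage_sub hz) hR_shift
    _ = ∫⁻ l in S, ENNReal.ofReal (R l) := by
      rw [← mul_assoc, one_div, ENNReal.inv_mul_cancel two_ne_zero ofNat_ne_top, one_mul]
    _ ≤ ∫⁻ l in S, ENNReal.ofReal ((1 - cos (l * z)) * R l) :=
      setLIntegral_mono' (measurableSet_cosNonposAbove z) fun _ hx =>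
        ofReal_le_ofReal_one_sub_cos_mul hx
    _ ≤ ∫⁻ l in Set.Ioi (0 : ℝ), ENNReal.ofReal ((1 - cos (l * z)) * R l) :=
      lintegral_mono_set hS_pos

theorem statement17 (R : ℝ → ℝ) (hR0 : ∀ x ∈ Set.Ioi (0 : ℝ), 0 ≤ R x)
    (hRanti : AntitoneOn R (Set.Ioi 0)) (z : ℝ) (hz : 0 < z) :
    (1 / 2) * ∫⁻ l in Set.Ioi (Real.pi / (2 * z)), ENNReal.ofReal (R l) ≤
      ∫⁻ l in Set.Ioi (0 : ℝ), ENNReal.ofReal ((1 - Real.cos (l * z)) * R l) :=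
  statement17_general R hRanti z hz
end

section
/- Let I : (0,∞) → [0,∞) be nonincreasing and let z > 0 be such that ∫_0^{π/z} λ·I(λ) dλ < ∞. Then for every T > 0, ∫_0^T sin(λz)·I(λ) dλ ≤ z·∫_0^{π/z} λ·I(λ) dλ. -/
/-! Write `p = π / z`. The substitution `x ↦ x + p` turns `∫ x in p..S, sin (x * z) * g x` into
`-∫ x in 0..S - p, sin (x * z) * g (x + p)`, and `g (· + p)` is again nonnegative and antitone, and
bounded by `g` where `sin (x * z) ≥ 0`. Induction on the number of half periods in `S` therefore gives
`0 ≤ ∫ x in 0..S, sin (x * z) * g x ≤ ∫ x in 0..p, sin (x * z) * g x` for all `S ≥ 0`, and on `(0, p)`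
we use `sin (x * z) ≤ x * z`. -/

open MeasureTheory Real Set

section

variable {z : ℝ} {g : ℝ → ℝ}

lemma sin_mul_add_pi_div (hz : z ≠ 0) (x : ℝ) : sin ((x + π / z) * z) = -sin (x * z) := by
  rw [add_mul, div_mul_cancel₀ π hz, sin_add_pi]

lemma sin_mul_nonneg_of_mem_Icc (hz : 0 < z) {x : ℝ} (hx : x ∈ Icc 0 (π / z)) :
    0 ≤ sin (x * z) :=
  sin_nonneg_of_nonneg_of_le_pi (mul_nonneg hx.1 hz.le) ((le_div_iff₀ hz).1 hx.2)

lemma sin_mul_mul_nonneg_of_mem_Icc (hz : 0 < z) (hg0 : ∀ x ∈ Ioi 0, 0 ≤ g x) {x : ℝ}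
    (hx : x ∈ Icc 0 (π / z)) : 0 ≤ sin (x * z) * g x := by
  rcases hx.1.eq_or_lt with rfl | hx0
  · simp
  · exact mul_nonneg (sin_mul_nonneg_of_mem_Icc hz hx) (hg0 x hx0)

lemma AntitoneOn.intervalIntegrable_sin_mul {a b : ℝ} (hg : AntitoneOn g (uIcc a b)) :
    IntervalIntegrable (fun x => sin (x * z) * g x) volume a b :=
  hg.intervalIntegrable.continuousOn_mul (by fun_prop)

lemma AntitoneOn.intervalIntegrable_sin_mul_of_nonneg (hz : 0 < z) (hg : AntitoneOn g (Ioi 0))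
    (h0 : IntervalIntegrable (fun x => sin (x * z) * g x) volume 0 (π / z)) {a b : ℝ}
    (ha : 0 ≤ a) (hb : 0 ≤ b) : IntervalIntegrable (fun x => sin (x * z) * g x) volume a b := by
  have from_zero (c : ℝ) (hc : 0 ≤ c) :
      IntervalIntegrable (fun x => sin (x * z) * g x) volume 0 c := by
    rcases hc.eq_or_lt with rfl | hc
    · exact IntervalIntegrable.refl
    · refine h0.trans (AntitoneOn.intervalIntegrable_sin_mul (hg.mono fun x hx => ?_))
      exact (lt_min (div_pos pi_pos hz) hc).trans_le hx.1
  exact (from_zero a ha).symm.trans (from_zero b hb)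

lemma integral_sin_mul_eq_sub_integral_shift (hz : z ≠ 0) {S : ℝ}
    (h₁ : IntervalIntegrable (fun x => sin (x * z) * g x) volume 0 (π / z))
    (h₂ : IntervalIntegrable (fun x => sin (x * z) * g x) volume (π / z) S) :
    ∫ x in 0..S, sin (x * z) * g x =
      (∫ x in 0..π / z, sin (x * z) * g x) - ∫ x in 0..S - π / z, sin (x * z) * g (x + π / z) := by
  have shift : ∫ x in 0..S - π / z, sin (x * z) * g (x + π / z) =
      -∫ x in π / z..S, sin (x * z) * g x := by
    have h := intervalIntegral.integral_comp_add_right (fun x => sin (x * z) * g x) (π / z)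
      (a := 0) (b := S - π / z)
    rw [zero_add, sub_add_cancel] at h
    rw [← h, ← intervalIntegral.integral_neg]
    simp only [sin_mul_add_pi_div hz, neg_mul, neg_neg]
  rw [shift, sub_neg_eq_add, intervalIntegral.integral_add_adjacent_intervals h₁ h₂]

lemma integral_sin_mul_mem_Icc_of_le_pi_div (hz : 0 < z) (hg0 : ∀ x ∈ Ioi 0, 0 ≤ g x)
    (hint : IntervalIntegrable (fun x => sin (x * z) * g x) volume 0 (π / z)) {S : ℝ}
    (hS₀ : 0 ≤ S) (hS : S ≤ π / z) :
    ∫ x in 0..S, sin (x * z) * g x ∈ Icc 0 (∫ x in 0..π / z, sin (x * z) * g x) :=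
  ⟨intervalIntegral.integral_nonneg hS₀ fun _ hx =>
      sin_mul_mul_nonneg_of_mem_Icc hz hg0 ⟨hx.1, hx.2.trans hS⟩,
    intervalIntegral.integral_mono_interval le_rfl hS₀ hS
      (ae_restrict_of_forall_mem measurableSet_Ioc fun _ hx =>
        sin_mul_mul_nonneg_of_mem_Icc hz hg0 ⟨hx.1.le, hx.2⟩) hint⟩

lemma integral_sin_mul_mem_Icc_of_le_nat_mul (hz : 0 < z) (n : ℕ) (hg0 : ∀ x ∈ Ioi 0, 0 ≤ g x)
    (hg : AntitoneOn g (Ioi 0))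
    (hint : IntervalIntegrable (fun x => sin (x * z) * g x) volume 0 (π / z)) {S : ℝ}
    (hS₀ : 0 ≤ S) (hS : S ≤ n * (π / z)) :
    ∫ x in 0..S, sin (x * z) * g x ∈ Icc 0 (∫ x in 0..π / z, sin (x * z) * g x) := by
  have hp : 0 < π / z := div_pos pi_pos hz
  induction n generalizing g S with
  | zero =>
    exact integral_sin_mul_mem_Icc_of_le_pi_div hz hg0 hint hS₀ (hS.trans (by simp [hp.le]))
  | succ n ih =>
    by_cases hSp : S ≤ π / z
    · exact integral_sin_mul_mem_Icc_of_le_pi_div hz hg0 hint hS₀ hSp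
    have hshift_anti : AntitoneOn (fun x => g (x + π / z)) (Ici 0) := fun x hx y hy hxy =>
      hg (show 0 < x + π / z by linarith [mem_Ici.1 hx])
        (show 0 < y + π / z by linarith [mem_Ici.1 hy]) (by linarith)
    have hshift_int : IntervalIntegrable (fun x => sin (x * z) * g (x + π / z)) volume 0 (π / z) :=
      (hshift_anti.mono (uIcc_of_le hp.le ▸ Icc_subset_Ici_self)).intervalIntegrable_sin_mul
    have hshift_le : ∫ x in 0..π / z, sin (x * z) * g (x + π / z) ≤
        ∫ x in 0..π / z, sin (x * z) * g x := by
      refine intervalIntegral.integral_mono_on hp.le hshift_int hint fun x hx => ?_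
      rcases hx.1.eq_or_lt with rfl | hx0
      · simp
      · exact mul_le_mul_of_nonneg_left (hg hx0 (show 0 < x + π / z by linarith) (by linarith))
          (sin_mul_nonneg_of_mem_Icc hz hx)
    obtain ⟨h₀, h₁⟩ := ih (fun x hx => hg0 _ (show 0 < x + π / z by linarith [mem_Ioi.1 hx]))
      (hshift_anti.mono Ioi_subset_Ici_self) hshift_int (S := S - π / z) (by linarith)
      (by push_cast at hS; linarith)
    rw [integral_sin_mul_eq_sub_integral_shift hz.ne' hint
      (hg.intervalIntegrable_sin_mul_of_nonneg hz hint hp.le hS₀)]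
    constructor <;> linarith

lemma integral_sin_mul_mem_Icc (hz : 0 < z) (hg0 : ∀ x ∈ Ioi 0, 0 ≤ g x)
    (hg : AntitoneOn g (Ioi 0))
    (hint : IntervalIntegrable (fun x => sin (x * z) * g x) volume 0 (π / z)) {S : ℝ}
    (hS₀ : 0 ≤ S) :
    ∫ x in 0..S, sin (x * z) * g x ∈ Icc 0 (∫ x in 0..π / z, sin (x * z) * g x) := by
  obtain ⟨n, hn⟩ := exists_nat_ge (S / (π / z))
  exact integral_sin_mul_mem_Icc_of_le_nat_mul hz n hg0 hg hint hS₀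
    ((div_le_iff₀ (div_pos pi_pos hz)).1 hn)

lemma abs_sin_mul_mul_le (hz : 0 < z) {x : ℝ} (hx : 0 < x) (hgx : 0 ≤ g x) :
    |sin (x * z) * g x| ≤ z * (x * g x) := by
  rw [abs_mul, abs_of_nonneg hgx]
  calc |sin (x * z)| * g x ≤ |x * z| * g x := mul_le_mul_of_nonneg_right abs_sin_le_abs hgx
    _ = z * (x * g x) := by rw [abs_of_pos (mul_pos hx hz)]; ring

lemma integrableOn_sin_mul_of_integrableOn_mul (hz : 0 < z) (hg0 : ∀ x ∈ Ioi 0, 0 ≤ g x)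
    (hg : AntitoneOn g (Ioi 0)) {s : Set ℝ} (hs : MeasurableSet s) (hsub : s ⊆ Ioi 0)
    (h : IntegrableOn (fun x => x * g x) s) : IntegrableOn (fun x => sin (x * z) * g x) s := by
  have hmeas : AEMeasurable g (volume.restrict s) :=
    (aemeasurable_restrict_of_antitoneOn measurableSet_Ioi hg).mono_set hsub
  refine (h.const_mul z).mono' ((by fun_prop : Measurable fun x => sin (x * z)).aemeasurable.mul
    hmeas).aestronglyMeasurable ?_
  filter_upwards [ae_restrict_mem hs] with x hx
  exact abs_sin_mul_mul_le hz (hsub hx) (hg0 x (hsub hx))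

end

theorem statement18 (I : ℝ → ℝ) (hI0 : ∀ x ∈ Set.Ioi (0 : ℝ), 0 ≤ I x)
    (hIanti : AntitoneOn I (Set.Ioi 0)) (z : ℝ) (hz : 0 < z)
    (hint : IntegrableOn (fun l => l * I l) (Set.Ioo 0 (Real.pi / z))) :
    ∀ T : ℝ, 0 < T →
      ∫ l in Set.Ioo 0 T, Real.sin (l * z) * I l ≤
        z * ∫ l in Set.Ioo 0 (Real.pi / z), l * I l := by
  intro T hT
  have hp : 0 < π / z := div_pos pi_pos hz
  have hsin : IntegrableOn (fun l => sin (l * z) * I l) (Ioo 0 (π / z)) :=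
    integrableOn_sin_mul_of_integrableOn_mul hz hI0 hIanti measurableSet_Ioo (fun _ hx => hx.1)
      hint
  calc ∫ l in Ioo 0 T, sin (l * z) * I l = ∫ l in 0..T, sin (l * z) * I l := by
        rw [intervalIntegral.integral_of_le hT.le, integral_Ioc_eq_integral_Ioo]
    _ ≤ ∫ l in 0..π / z, sin (l * z) * I l :=
        (integral_sin_mul_mem_Icc hz hI0 hIanti
          ((intervalIntegrable_iff_integrableOn_Ioo_of_le hp.le).2 hsin) hT.le).2
    _ = ∫ l in Ioo 0 (π / z), sin (l * z) * I l := by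
        rw [intervalIntegral.integral_of_le hp.le, integral_Ioc_eq_integral_Ioo]
    _ ≤ ∫ l in Ioo 0 (π / z), z * (l * I l) :=
        setIntegral_mono_on hsin (hint.const_mul z) measurableSet_Ioo fun l hl =>
          (le_abs_self _).trans (abs_sin_mul_mul_le hz hl.1 (hI0 l hl.1))
    _ = z * ∫ l in Ioo 0 (π / z), l * I l := integral_const_mul z _
end

section
/- Let g : (0,∞) → (0,∞) be measurable, bounded on compact subsets of (0,∞), slowly varying at infinity (i.e. for every c>0, g(cx)/g(x) → 1 as x → ∞), and satisfy ∫_0^1 g(v) dv < ∞. Then lim_{λ→∞} ( ∫_0^∞ (1 − cos(λx))·g(1/x)·x^{−2} dx ) / ( λ·g(λ) ) = π/2. -/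
/-!
Potter's bound `g y ≤ e^{1/2} g x ((y/x)^{1/2} + (x/y)^{1/2})` for `x, y ≥ X` follows from the
uniform convergence theorem for `log ∘ g ∘ exp`, proved with Egorov's theorem. Substituting
`u = λx` on `(0, 1/X]` turns that part of the integral, divided by `λ g(λ)`, into
`∫_0^{λ/X} (1 - cos u) / u² · g(λ/u) / g(λ) du`, where Potter's bound gives the integrable
majorant `e^{1/2} (1 - cos u) / u² · (u^{-1/2} + u^{1/2})`. By dominated convergence this
tends to `∫_0^∞ (1 - cos u) / u² du = π/2`, computed by Fubini from `∫_0^∞ t e^{-ut} dt = u⁻²`.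
On `(1/X, ∞)` the integral is at most `2 ∫_0^X g`, negligible since `λ g(λ) → ∞`.
-/

open MeasureTheory Real Filter Set Topology

lemma one_sub_cos_nonneg (u : ℝ) : 0 ≤ 1 - cos u := by linarith [cos_le_one u]

lemma one_sub_cos_le_two (u : ℝ) : 1 - cos u ≤ 2 := by linarith [neg_one_le_cos u]

lemma one_sub_cos_div_sq_le_half (u : ℝ) : (1 - cos u) / u ^ 2 ≤ 1 / 2 := by
  rcases eq_or_ne u 0 with rfl | hu
  · norm_num
  rw [div_le_iff₀ (by positivity)]
  linarith [one_sub_sq_div_two_le_cos (x := u)]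

lemma integrableOn_exp_neg_mul_mul_cos {t : ℝ} (ht : 0 < t) :
    IntegrableOn (fun u => rexp (-t * u) * cos u) (Ioi 0) := by
  have h : IntegrableOn (fun u : ℝ => (Complex.exp ((-t + Complex.I) * u)).re) (Ioi 0) :=
    (integrableOn_exp_mul_complex_Ioi (a := -t + Complex.I) (by simpa using ht) 0).re
  refine h.congr_fun (fun u _ => ?_) measurableSet_Ioi
  simp [Complex.exp_re]

lemma integral_exp_neg_mul_mul_cos {t : ℝ} (ht : 0 < t) :
    ∫ u in Ioi 0, rexp (-t * u) * cos u = t / (t ^ 2 + 1) := by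
  have h := congrArg Complex.re
    (integral_exp_mul_complex_Ioi (a := -t + Complex.I) (by simpa using ht) 0)
  rw [← RCLike.re_to_complex,
    ← integral_re (integrableOn_exp_mul_complex_Ioi (by simpa using ht) 0)] at h
  convert h using 1
  · refine setIntegral_congr_fun measurableSet_Ioi (fun u _ => ?_)
    simp [Complex.exp_re]
  · simp [Complex.div_re, Complex.normSq, sq]

lemma integrableOn_exp_neg_mul_mul_one_sub_cos {t : ℝ} (ht : 0 < t) :
    IntegrableOn (fun u => rexp (-t * u) * (1 - cos u)) (Ioi 0) := by
  simp_rw [mul_sub, mul_one]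
  exact (exp_neg_integrableOn_Ioi 0 ht).sub (integrableOn_exp_neg_mul_mul_cos ht)

lemma integral_exp_neg_mul_mul_one_sub_cos {t : ℝ} (ht : 0 < t) :
    ∫ u in Ioi 0, rexp (-t * u) * (1 - cos u) = 1 / (t * (1 + t ^ 2)) := by
  simp_rw [mul_sub, mul_one]
  rw [integral_sub (exp_neg_integrableOn_Ioi 0 ht) (integrableOn_exp_neg_mul_mul_cos ht),
    integral_exp_mul_Ioi (neg_neg_of_pos ht), integral_exp_neg_mul_mul_cos ht, mul_zero,
    exp_zero]
  field_simp
  ring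

lemma integral_mul_exp_neg_mul {u : ℝ} (hu : 0 < u) :
    ∫ t in Ioi 0, t * rexp (-u * t) = 1 / u ^ 2 := by
  have := integral_rpow_mul_exp_neg_mul_Ioi (a := 2) two_pos hu
  norm_num at this
  simpa using this

theorem integral_one_sub_cos_div_sq : ∫ u in Ioi 0, (1 - cos u) / u ^ 2 = π / 2 := by
  set F : ℝ × ℝ → ℝ := fun p => p.1 * (rexp (-p.1 * p.2) * (1 - cos p.2)) with hF_def
  have hF_nonneg : ∀ t u, 0 ≤ t → 0 ≤ F (t, u) := fun t u ht => by
    have := one_sub_cos_nonneg u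
    simp only [hF_def]
    positivity
  have hF_inner : ∀ t > 0, ∫ u in Ioi 0, F (t, u) = (1 + t ^ 2)⁻¹ := fun t ht => by
    simp only [hF_def]
    rw [integral_const_mul, integral_exp_neg_mul_mul_one_sub_cos ht]
    field_simp
  have hF : Integrable F ((volume.restrict (Ioi 0)).prod (volume.restrict (Ioi 0))) := by
    refine (integrable_prod_iff (by fun_prop)).2 ⟨?_, ?_⟩
    · filter_upwards [ae_restrict_mem measurableSet_Ioi] with t ht
      exact (integrableOn_exp_neg_mul_mul_one_sub_cos ht).const_mul t
    · refine integrable_inv_one_add_sq.integrableOn.congr_fun (fun t ht => ?_) measurableSet_Ioi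
      simp_rw [norm_of_nonneg (hF_nonneg t _ ht.le)]
      exact (hF_inner t ht).symm
  calc ∫ u in Ioi 0, (1 - cos u) / u ^ 2 = ∫ u in Ioi 0, ∫ t in Ioi 0, F (t, u) := by
        refine setIntegral_congr_fun measurableSet_Ioi (fun u hu => ?_)
        have (t : ℝ) : F (t, u) = (1 - cos u) * (t * rexp (-u * t)) := by
          simp only [hF_def, neg_mul, mul_comm u t]; ring
        simp_rw [this, integral_const_mul, integral_mul_exp_neg_mul hu, mul_one_div]
    _ = ∫ t in Ioi 0, ∫ u in Ioi 0, F (t, u) := (integral_integral_swap hF).symm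
    _ = ∫ t in Ioi 0, (1 + t ^ 2)⁻¹ := setIntegral_congr_fun measurableSet_Ioi hF_inner
    _ = π / 2 := by simp [integral_Ioi_inv_one_add_sq]

lemma integrableOn_one_sub_cos_div_sq_mul_rpow {r : ℝ} (hr : |r| < 1) :
    IntegrableOn (fun u => (1 - cos u) / u ^ 2 * u ^ r) (Ioi 0) := by
  obtain ⟨hr₀, hr₁⟩ := abs_lt.1 hr
  have hm : AEStronglyMeasurable (fun u : ℝ => (1 - cos u) / u ^ 2 * u ^ r) := by fun_prop
  rw [← Ioc_union_Ioi_eq_Ioi zero_le_one]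
  refine IntegrableOn.union ?_ ?_
  · refine Integrable.mono'
      ((intervalIntegral.intervalIntegrable_rpow' hr₀ (a := 0) (b := 1)).1.const_mul (1 / 2))
      hm.restrict ?_
    filter_upwards [ae_restrict_mem measurableSet_Ioc] with u hu
    have := rpow_nonneg hu.1.le r
    rw [norm_of_nonneg (by have := one_sub_cos_nonneg u; positivity)]
    exact mul_le_mul_of_nonneg_right (one_sub_cos_div_sq_le_half u) this
  · refine Integrable.mono' ((integrableOn_Ioi_rpow_of_lt (by linarith : r - 2 < -1)
      zero_lt_one).const_mul 2) hm.restrict ?_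
    filter_upwards [ae_restrict_mem measurableSet_Ioi] with u (hu : 1 < u)
    have hu₀ : 0 < u := by linarith
    rw [norm_of_nonneg (by have := one_sub_cos_nonneg u; positivity), rpow_sub hu₀,
      rpow_two, div_mul_eq_mul_div, mul_div_assoc]
    gcongr
    exact one_sub_cos_le_two u

lemma integrableOn_potter_majorant {δ : ℝ} (hδ : |δ| < 1) :
    IntegrableOn
      (fun u => exp δ * ((1 - cos u) / u ^ 2 * u ^ (-δ) + (1 - cos u) / u ^ 2 * u ^ δ))
      (Ioi 0) :=
  ((integrableOn_one_sub_cos_div_sq_mul_rpow (r := -δ) (by rwa [abs_neg])).add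
    (integrableOn_one_sub_cos_div_sq_mul_rpow hδ)).const_mul _

lemma MeasureTheory.IntegrableOn.one_sub_cos_mul {φ : ℝ → ℝ} {s : Set ℝ}
    (hφ : IntegrableOn φ s) (lam : ℝ) :
    IntegrableOn (fun x => (1 - cos (lam * x)) * φ x) s :=
  hφ.bdd_mul (c := 2) (by fun_prop) (ae_of_all _ fun x => by
    rw [norm_of_nonneg (one_sub_cos_nonneg _)]
    exact one_sub_cos_le_two _)

lemma setIntegral_one_sub_cos_mul_le {φ : ℝ → ℝ} {s : Set ℝ} (hs : MeasurableSet s)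
    (hφ : IntegrableOn φ s) (hφ₀ : ∀ x ∈ s, 0 ≤ φ x) (lam : ℝ) :
    ∫ x in s, (1 - cos (lam * x)) * φ x ≤ 2 * ∫ x in s, φ x := by
  rw [← integral_const_mul]
  exact setIntegral_mono_on (hφ.one_sub_cos_mul lam) (hφ.const_mul 2) hs
    fun x hx => mul_le_mul_of_nonneg_right (one_sub_cos_le_two _) (hφ₀ x hx)

lemma tendsto_setIntegral_one_sub_cos_mul_div_atTop {φ F : ℝ → ℝ} {s : Set ℝ}
    (hs : MeasurableSet s) (hφ : IntegrableOn φ s) (hφ₀ : ∀ x ∈ s, 0 ≤ φ x)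
    (hF : Tendsto F atTop atTop) :
    Tendsto (fun lam => (∫ x in s, (1 - cos (lam * x)) * φ x) / F lam) atTop (𝓝 0) := by
  refine squeeze_zero' (g := fun lam => (2 * ∫ x in s, φ x) / F lam) ?_ ?_
    (tendsto_const_nhds.div_atTop hF)
  · filter_upwards [hF.eventually_ge_atTop 0] with lam hlam
    exact div_nonneg (setIntegral_nonneg hs fun x hx =>
      mul_nonneg (one_sub_cos_nonneg _) (hφ₀ x hx)) hlam
  · filter_upwards [hF.eventually_ge_atTop 0] with lam hlam
    exact div_le_div_of_nonneg_right (setIntegral_one_sub_cos_mul_le hs hφ hφ₀ lam) hlam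

lemma exists_volume_le_eventually_forall_abs_sub_lt {h : ℝ → ℝ} (hm : Measurable h)
    (hh : ∀ s, Tendsto (fun x => h (x + s) - h x) atTop (𝓝 0)) {y : ℕ → ℝ}
    (hy : Tendsto y atTop atTop) {S : Set ℝ} (hS : MeasurableSet S) (hS' : volume S ≠ ⊤)
    {ε δ : ℝ} (hε : 0 < ε) (hδ : 0 < δ) :
    ∃ t : Set ℝ, volume t ≤ ENNReal.ofReal δ ∧
      ∀ᶠ n in atTop, ∀ σ ∈ S \ t, |h (y n + σ) - h (y n)| < ε := by
  obtain ⟨t, -, -, ht, hunif⟩ := tendstoUniformlyOn_of_ae_tendsto (μ := volume)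
    (f := fun n σ => h (y n + σ) - h (y n)) (g := fun _ => 0)
    (fun n => by fun_prop) stronglyMeasurable_const hS hS'
    (ae_of_all _ fun σ _ => (hh σ).comp hy) hδ
  refine ⟨t, ht, (Metric.tendstoUniformlyOn_iff.1 hunif ε hε).mono fun n hn σ hσ => ?_⟩
  simpa [Real.dist_eq, abs_sub_comm] using hn σ hσ

lemma exists_mem_Icc_notMem_and_add_notMem {t₁ t₂ : Set ℝ} (h : volume t₁ + volume t₂ < 1)
    (s : ℝ) : ∃ τ ∈ Icc (0 : ℝ) 1, s + τ ∉ t₁ ∧ τ ∉ t₂ := by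
  by_contra! hcon
  have hsub : Icc (0 : ℝ) 1 ⊆ (s + ·) ⁻¹' t₁ ∪ t₂ := fun τ hτ => by
    by_cases hτ₁ : s + τ ∈ t₁
    · exact Or.inl hτ₁
    · exact Or.inr (hcon τ hτ hτ₁)
  have := (measure_mono (μ := volume) hsub).trans (measure_union_le _ _)
  rw [Real.volume_Icc, measure_preimage_add] at this
  norm_num at this
  exact lt_irrefl _ (this.trans_lt h)

/-- The uniform convergence theorem for slowly varying functions, in additive form. -/
theorem eventually_forall_Icc_abs_sub_le {h : ℝ → ℝ} (hm : Measurable h)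
    (hh : ∀ s, Tendsto (fun x => h (x + s) - h x) atTop (𝓝 0)) {ε : ℝ} (hε : 0 < ε) :
    ∀ᶠ x in atTop, ∀ s ∈ Icc (0 : ℝ) 1, |h (x + s) - h x| ≤ ε := by
  -- Along bad sequences `x n`, `s n`, Egorov makes `h (x n + σ) - h (x n)` and
  -- `h (x n + s n + σ) - h (x n + s n)` uniformly small for `σ ∈ [0, 2]` off two small
  -- sets; a `τ` with `s N + τ` and `τ` outside them splits `h (x N + s N) - h (x N)` into
  -- two such terms.
  by_contra hcon
  obtain ⟨x, s, hx, hs, hbig⟩ : ∃ x s : ℕ → ℝ, Tendsto x atTop atTop ∧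
      (∀ n, s n ∈ Icc (0 : ℝ) 1) ∧ ∀ n, ε < |h (x n + s n) - h (x n)| := by
    have := frequently_atTop.1 (not_eventually.1 hcon)
    choose x hx hbad using fun n : ℕ => this n
    push Not at hbad
    choose s hs hbig using hbad
    exact ⟨x, s, tendsto_atTop_mono hx tendsto_natCast_atTop_atTop, hs, hbig⟩
  have hxs : Tendsto (fun n => x n + s n) atTop atTop :=
    tendsto_atTop_mono (fun n => le_add_of_nonneg_right (hs n).1) hx
  have hIcc : volume (Icc (0 : ℝ) 2) ≠ ⊤ := measure_Icc_lt_top.ne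
  obtain ⟨t₁, ht₁, h₁⟩ := exists_volume_le_eventually_forall_abs_sub_lt hm hh hx
    measurableSet_Icc hIcc (half_pos hε) (by norm_num : (0 : ℝ) < 1 / 4)
  obtain ⟨t₂, ht₂, h₂⟩ := exists_volume_le_eventually_forall_abs_sub_lt hm hh hxs
    measurableSet_Icc hIcc (half_pos hε) (by norm_num : (0 : ℝ) < 1 / 4)
  obtain ⟨N, hN₁, hN₂⟩ := (h₁.and h₂).exists
  have hsmall : volume t₁ + volume t₂ < 1 := by
    refine (add_le_add ht₁ ht₂).trans_lt ?_
    rw [← ENNReal.ofReal_add (by norm_num) (by norm_num)]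
    norm_num
  obtain ⟨τ, hτ, hτ₁, hτ₂⟩ := exists_mem_Icc_notMem_and_add_notMem hsmall (s N)
  have e₁ := hN₁ (s N + τ)
    ⟨⟨by linarith [(hs N).1, hτ.1], by linarith [(hs N).2, hτ.2]⟩, hτ₁⟩
  have e₂ := hN₂ τ ⟨⟨hτ.1, by linarith [hτ.2]⟩, hτ₂⟩
  rw [← add_assoc] at e₁
  have := abs_sub (h (x N + s N + τ) - h (x N)) (h (x N + s N + τ) - h (x N + s N))
  rw [sub_sub_sub_cancel_left] at this
  linarith [hbig N]

lemma abs_add_sub_le_mul_natCast {h : ℝ → ℝ} {ε X : ℝ}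
    (hX : ∀ x ≥ X, ∀ s ∈ Icc (0 : ℝ) 1, |h (x + s) - h x| ≤ ε) (n : ℕ) :
    ∀ x ≥ X, ∀ s ∈ Icc (0 : ℝ) n, |h (x + s) - h x| ≤ ε * n := by
  induction n with
  | zero =>
    intro x _ s hs
    obtain rfl : s = 0 := le_antisymm (by simpa using hs.2) hs.1
    simp
  | succ n ih =>
    intro x hx s hs
    push_cast at hs ⊢
    have e₁ := hX x hx 1 ⟨zero_le_one, le_rfl⟩
    rcases le_or_gt s 1 with hs₁ | hs₁
    · have := hX x hx s ⟨hs.1, hs₁⟩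
      nlinarith [(Nat.cast_nonneg n : (0 : ℝ) ≤ n), abs_nonneg (h (x + 1) - h x)]
    · have e₂ := ih (x + 1) (by linarith) (s - 1) ⟨by linarith, by linarith [hs.2]⟩
      rw [add_add_sub_cancel] at e₂
      calc |h (x + s) - h x| = |(h (x + s) - h (x + 1)) + (h (x + 1) - h x)| := by ring_nf
        _ ≤ |h (x + s) - h (x + 1)| + |h (x + 1) - h x| := abs_add_le _ _
        _ ≤ ε * n + ε := add_le_add e₂ e₁
        _ = ε * (n + 1) := by ring

lemma abs_sub_le_of_forall_Icc {h : ℝ → ℝ} {ε X : ℝ}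
    (hX : ∀ x ≥ X, ∀ s ∈ Icc (0 : ℝ) 1, |h (x + s) - h x| ≤ ε) {a b : ℝ}
    (ha : X ≤ a) (hb : X ≤ b) : |h b - h a| ≤ ε * (|b - a| + 1) := by
  wlog hab : a ≤ b generalizing a b
  · rw [abs_sub_comm, abs_sub_comm b]
    exact this hb ha (le_of_not_ge hab)
  have hε : 0 ≤ ε := (abs_nonneg _).trans (hX X le_rfl 0 ⟨le_rfl, zero_le_one⟩)
  have hs : b - a ∈ Icc (0 : ℝ) ⌈b - a⌉₊ := ⟨sub_nonneg.2 hab, Nat.le_ceil _⟩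
  calc |h b - h a| = |h (a + (b - a)) - h a| := by rw [add_sub_cancel]
    _ ≤ ε * ⌈b - a⌉₊ := abs_add_sub_le_mul_natCast hX _ a ha _ hs
    _ ≤ ε * (|b - a| + 1) := by
      rw [abs_of_nonneg hs.1]
      exact mul_le_mul_of_nonneg_left (Nat.ceil_lt_add_one hs.1).le hε

lemma exp_mul_abs_sub_log_le {x y δ : ℝ} (hx : 0 < x) (hy : 0 < y) :
    exp (δ * |log y - log x|) ≤ (y / x) ^ δ + (x / y) ^ δ := by
  rw [rpow_def_of_pos (by positivity), rpow_def_of_pos (by positivity), log_div hy.ne' hx.ne',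
    log_div hx.ne' hy.ne', ← neg_sub (log y)]
  rcases abs_cases (log y - log x) with ⟨h, -⟩ | ⟨h, -⟩ <;> rw [h, mul_comm δ]
  · exact le_add_of_nonneg_right (exp_pos _).le
  · exact le_add_of_nonneg_left (exp_pos _).le

def SlowlyVarying (g : ℝ → ℝ) : Prop :=
  ∀ c : ℝ, 0 < c → Tendsto (fun x => g (c * x) / g x) atTop (𝓝 1)

def PotterBound (g : ℝ → ℝ) (δ X : ℝ) : Prop :=
  ∀ x y, X ≤ x → X ≤ y → g y ≤ exp δ * g x * ((y / x) ^ δ + (x / y) ^ δ)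

namespace SlowlyVarying

variable {g : ℝ → ℝ}

lemma tendsto_log_comp_exp_add_sub (hg : SlowlyVarying g)
    (hgpos : ∀ x ∈ Ioi (0 : ℝ), 0 < g x) (s : ℝ) :
    Tendsto (fun x => log (g (exp (x + s))) - log (g (exp x))) atTop (𝓝 0) := by
  have h := ((continuousAt_log one_ne_zero).tendsto.comp
    ((hg (exp s) (exp_pos s)).comp tendsto_exp_atTop))
  rw [log_one] at h
  refine h.congr fun x => ?_
  simp only [Function.comp_apply, exp_add, mul_comm (exp x)]
  rw [log_div (hgpos _ (mem_Ioi.2 (by positivity))).ne' (hgpos _ (exp_pos x)).ne']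

theorem exists_potterBound (hg : SlowlyVarying g) (hgm : Measurable g)
    (hgpos : ∀ x ∈ Ioi (0 : ℝ), 0 < g x) {δ : ℝ} (hδ : 0 < δ) :
    ∃ X > 0, PotterBound g δ X := by
  obtain ⟨X₀, hX₀⟩ := (eventually_forall_Icc_abs_sub_le
    (measurable_log.comp (hgm.comp measurable_exp))
    (hg.tendsto_log_comp_exp_add_sub hgpos) hδ).exists_forall_of_atTop
  refine ⟨exp X₀, exp_pos _, fun x y hx hy => ?_⟩
  have hx₀ : 0 < x := (exp_pos _).trans_le hx
  have hy₀ : 0 < y := (exp_pos _).trans_le hy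
  have hlog := abs_sub_le_of_forall_Icc hX₀ ((le_log_iff_exp_le hx₀).2 hx)
    ((le_log_iff_exp_le hy₀).2 hy)
  simp only [Function.comp_apply, exp_log hx₀, exp_log hy₀] at hlog
  have hgx := hgpos x hx₀
  calc g y = exp (log (g y)) := (exp_log (hgpos y hy₀)).symm
    _ ≤ exp (δ + log (g x) + δ * |log y - log x|) := by
        gcongr
        linarith [le_abs_self (log (g y) - log (g x))]
    _ = exp δ * g x * exp (δ * |log y - log x|) := by rw [exp_add, exp_add, exp_log hgx]
    _ ≤ exp δ * g x * ((y / x) ^ δ + (x / y) ^ δ) := by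
        gcongr
        exact exp_mul_abs_sub_log_le hx₀ hy₀

theorem tendsto_rpow_mul_atTop (hg : SlowlyVarying g) (hgm : Measurable g)
    (hgpos : ∀ x ∈ Ioi (0 : ℝ), 0 < g x) {δ : ℝ} (hδ : 0 < δ) :
    Tendsto (fun x => x ^ δ * g x) atTop atTop := by
  obtain ⟨X, hX, hP⟩ := hg.exists_potterBound hgm hgpos (half_pos hδ)
  have hgX₀ := hgpos X hX
  set c := g X * X ^ (δ / 2) / (2 * exp (δ / 2))
  refine tendsto_atTop_mono' atTop ?_
    ((tendsto_rpow_atTop (half_pos hδ)).const_mul_atTop (by positivity : 0 < c))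
  filter_upwards [eventually_ge_atTop X] with x hx
  have hx₀ : 0 < x := hX.trans_le hx
  have hgx₀ := hgpos x hx₀
  have hXx : (X / x) ^ (δ / 2) ≤ (x / X) ^ (δ / 2) := by gcongr
  have hgX : g X ≤ exp (δ / 2) * g x * (2 * (x / X) ^ (δ / 2)) :=
    (hP x X hx le_rfl).trans (by gcongr; linarith)
  rw [div_rpow hx₀.le hX.le] at hgX
  have : 0 < X ^ (δ / 2) := by positivity
  calc c * x ^ (δ / 2) = g X * (X ^ (δ / 2) * x ^ (δ / 2) / (2 * exp (δ / 2))) := by ring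
    _ ≤ exp (δ / 2) * g x * (2 * (x ^ (δ / 2) / X ^ (δ / 2))) *
          (X ^ (δ / 2) * x ^ (δ / 2) / (2 * exp (δ / 2))) := by gcongr
    _ = x ^ (δ / 2 + δ / 2) * g x := by rw [rpow_add hx₀]; field_simp
    _ = x ^ δ * g x := by rw [add_halves]

end SlowlyVarying

lemma integrableOn_Ioo_zero_of_bounded {g : ℝ → ℝ} (hgm : Measurable g)
    (hgpos : ∀ x ∈ Ioi (0 : ℝ), 0 < g x)
    (hgbdd : ∀ a b : ℝ, 0 < a → ∃ C : ℝ, ∀ x ∈ Icc a b, g x ≤ C)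
    (hint : IntegrableOn g (Ioo 0 1)) (b : ℝ) : IntegrableOn g (Ioo 0 b) := by
  obtain ⟨C, hC⟩ := hgbdd 1 b one_pos
  have hIcc : IntegrableOn g (Icc 1 b) := by
    refine Measure.integrableOn_of_bounded (M := C) measure_Icc_lt_top.ne
      hgm.aestronglyMeasurable ?_
    filter_upwards [ae_restrict_mem measurableSet_Icc] with x hx
    rw [norm_of_nonneg (hgpos x (zero_lt_one.trans_le hx.1)).le]
    exact hC x hx
  refine (hint.union hIcc).mono_set fun x hx => ?_
  rcases lt_or_ge x 1 with h | h
  · exact Or.inl ⟨hx.1, h⟩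
  · exact Or.inr ⟨h, hx.2.le⟩

lemma MeasureTheory.IntegrableOn.comp_one_div_div_sq {g : ℝ → ℝ} {X : ℝ} (hX : 0 < X)
    (hg : IntegrableOn g (Ioo 0 X)) : IntegrableOn (fun x => g (1 / x) / x ^ 2) (Ioi X⁻¹) := by
  have h := (integrableOn_Ioi_comp_rpow_iff ((Ioo 0 X).indicator g) (p := -1) (by norm_num)).2
    ((integrable_indicator_iff measurableSet_Ioo).2 hg).integrableOn
  refine (h.mono_set (Ioi_subset_Ioi (inv_pos.2 hX).le)).congr_fun
    (fun x (hx : X⁻¹ < x) => ?_) measurableSet_Ioi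
  have hx₀ : 0 < x := (inv_pos.2 hX).trans hx
  have hmem : x⁻¹ ∈ Ioo 0 X := ⟨inv_pos.2 hx₀, (inv_lt_comm₀ hx₀ hX).2 hx⟩
  dsimp only
  rw [rpow_neg_one, indicator_of_mem hmem, show (-1 : ℝ) - 1 = -2 by norm_num, rpow_neg hx₀.le,
    smul_eq_mul]
  norm_num
  ring

lemma one_sub_cos_mul_div_sq_eq (φ : ℝ → ℝ) {lam : ℝ} (hlam : lam ≠ 0) (x : ℝ) :
    (1 - cos (lam * x)) * φ (1 / x) / x ^ 2 =
      lam ^ 2 * ((1 - cos (lam * x)) / (lam * x) ^ 2 * φ (lam / (lam * x))) := by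
  rcases eq_or_ne x 0 with rfl | hx
  · simp
  rw [div_mul_cancel_left₀ hlam]
  field_simp

lemma intervalIntegral_one_sub_cos_mul_div_sq (φ : ℝ → ℝ) {lam : ℝ} (hlam : lam ≠ 0)
    (a : ℝ) :
    ∫ x in 0..a, (1 - cos (lam * x)) * φ (1 / x) / x ^ 2 =
      lam * ∫ u in 0..lam * a, (1 - cos u) / u ^ 2 * φ (lam / u) := by
  simp_rw [one_sub_cos_mul_div_sq_eq φ hlam, intervalIntegral.integral_const_mul,
    intervalIntegral.integral_comp_mul_left (fun u => (1 - cos u) / u ^ 2 * φ (lam / u)) hlam,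
    mul_zero, smul_eq_mul]
  field_simp

lemma IntervalIntegrable.one_sub_cos_mul_div_sq {φ : ℝ → ℝ} {lam a : ℝ} (hlam : lam ≠ 0)
    (h : IntervalIntegrable (fun u => (1 - cos u) / u ^ 2 * φ (lam / u)) volume 0 (lam * a)) :
    IntervalIntegrable (fun x => (1 - cos (lam * x)) * φ (1 / x) / x ^ 2) volume 0 a := by
  simp_rw [one_sub_cos_mul_div_sq_eq φ hlam]
  have := h.comp_mul_left (c := lam)
  rw [zero_div, mul_div_cancel_left₀ a hlam] at this
  exact this.const_mul _

namespace PotterBound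

variable {g : ℝ → ℝ} {δ X : ℝ}

lemma le_div (hP : PotterBound g δ X) (hX : 0 < X) {lam u : ℝ} (hlam : X ≤ lam)
    (hu : u ∈ Ioc 0 (lam / X)) :
    g (lam / u) ≤ exp δ * g lam * (u ^ (-δ) + u ^ δ) := by
  have hlam₀ : 0 < lam := hX.trans_le hlam
  have hXu : X ≤ lam / u := by rw [le_div_iff₀ hu.1, mul_comm, ← le_div_iff₀ hX]; exact hu.2
  have := hP lam (lam / u) hlam hXu
  rwa [div_div_cancel_left' hlam₀.ne', div_div_cancel₀ hlam₀.ne', inv_rpow hu.1.le,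
    ← rpow_neg hu.1.le] at this

lemma norm_indicator_le (hP : PotterBound g δ X) (hX : 0 < X)
    (hgpos : ∀ x ∈ Ioi (0 : ℝ), 0 < g x) {lam u : ℝ} (hlam : X ≤ lam) (hu₀ : 0 < u) :
    ‖(Ioc 0 (lam / X)).indicator (fun u => (1 - cos u) / u ^ 2 * (g (lam / u) / g lam)) u‖ ≤
      exp δ * ((1 - cos u) / u ^ 2 * u ^ (-δ) + (1 - cos u) / u ^ 2 * u ^ δ) := by
  have hglam := hgpos lam (hX.trans_le hlam)
  have := one_sub_cos_nonneg u
  by_cases hu : u ∈ Ioc 0 (lam / X)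
  · have := hgpos (lam / u) (div_pos (hX.trans_le hlam) hu.1)
    rw [indicator_of_mem hu, norm_of_nonneg (by positivity), ← mul_add, mul_left_comm]
    gcongr
    rw [div_le_iff₀ hglam]
    exact (hP.le_div hX hlam hu).trans_eq (by ring)
  · rw [indicator_of_notMem hu, norm_zero]
    positivity

lemma integrableOn_Ioc (hP : PotterBound g δ X) (hX : 0 < X) (hgm : Measurable g)
    (hgpos : ∀ x ∈ Ioi (0 : ℝ), 0 < g x) (hδ : |δ| < 1) {lam : ℝ} (hlam : X ≤ lam) :
    IntegrableOn (fun u => (1 - cos u) / u ^ 2 * g (lam / u)) (Ioc 0 (lam / X)) := by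
  refine Integrable.mono' (IntegrableOn.mono_set (t := Ioi 0)
    ((integrableOn_potter_majorant hδ).const_mul (g lam)) Ioc_subset_Ioi_self) (by fun_prop) ?_
  filter_upwards [ae_restrict_mem measurableSet_Ioc] with u hu
  have := one_sub_cos_nonneg u
  have := hgpos (lam / u) (div_pos (hX.trans_le hlam) hu.1)
  rw [norm_of_nonneg (by positivity)]
  calc (1 - cos u) / u ^ 2 * g (lam / u)
      ≤ (1 - cos u) / u ^ 2 * (exp δ * g lam * (u ^ (-δ) + u ^ δ)) := by
        gcongr; exact hP.le_div hX hlam hu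
    _ = _ := by ring

lemma intervalIntegrable (hP : PotterBound g δ X) (hX : 0 < X) (hgm : Measurable g)
    (hgpos : ∀ x ∈ Ioi (0 : ℝ), 0 < g x) (hδ : |δ| < 1) {lam : ℝ} (hlam : X ≤ lam) :
    IntervalIntegrable (fun x => (1 - cos (lam * x)) * g (1 / x) / x ^ 2) volume 0 X⁻¹ := by
  have hlam₀ := hX.trans_le hlam
  refine IntervalIntegrable.one_sub_cos_mul_div_sq hlam₀.ne' ?_
  rw [intervalIntegrable_iff_integrableOn_Ioc_of_le (by positivity), ← div_eq_mul_inv]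
  exact hP.integrableOn_Ioc hX hgm hgpos hδ hlam

theorem tendsto_integral_indicator (hP : PotterBound g δ X) (hX : 0 < X)
    (hg : SlowlyVarying g) (hgm : Measurable g)
    (hgpos : ∀ x ∈ Ioi (0 : ℝ), 0 < g x) (hδ : |δ| < 1) :
    Tendsto (fun lam => ∫ u in Ioi 0, (Ioc 0 (lam / X)).indicator
      (fun u => (1 - cos u) / u ^ 2 * (g (lam / u) / g lam)) u) atTop (𝓝 (π / 2)) := by
  rw [← integral_one_sub_cos_div_sq]
  refine tendsto_integral_filter_of_dominated_convergence _
    (Eventually.of_forall fun lam => (Measurable.indicator (by fun_prop)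
      measurableSet_Ioc).aestronglyMeasurable) ?_
    (integrableOn_potter_majorant hδ) ?_
  · filter_upwards [eventually_ge_atTop X] with lam hlam
    filter_upwards [ae_restrict_mem measurableSet_Ioi] with u hu
    exact hP.norm_indicator_le hX hgpos hlam hu
  · filter_upwards [ae_restrict_mem measurableSet_Ioi] with u (hu : 0 < u)
    have := (hg u⁻¹ (inv_pos.2 hu)).const_mul ((1 - cos u) / u ^ 2)
    rw [mul_one] at this
    refine this.congr' ?_
    filter_upwards [eventually_ge_atTop (u * X)] with lam hlam
    rw [indicator_of_mem (show u ∈ Ioc 0 (lam / X) from ⟨hu, (le_div_iff₀ hX).2 hlam⟩),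
      inv_mul_eq_div]

theorem tendsto_intervalIntegral_div (hP : PotterBound g δ X) (hX : 0 < X)
    (hg : SlowlyVarying g) (hgm : Measurable g) (hgpos : ∀ x ∈ Ioi (0 : ℝ), 0 < g x)
    (hδ : |δ| < 1) :
    Tendsto (fun lam => (∫ x in 0..X⁻¹, (1 - cos (lam * x)) * g (1 / x) / x ^ 2) /
      (lam * g lam)) atTop (𝓝 (π / 2)) := by
  refine (hP.tendsto_integral_indicator hX hg hgm hgpos hδ).congr' ?_
  filter_upwards [eventually_ge_atTop X] with lam hlam
  have hlam₀ := hX.trans_le hlam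
  rw [integral_indicator measurableSet_Ioc, Measure.restrict_restrict measurableSet_Ioc,
    inter_eq_left.2 Ioc_subset_Ioi_self, intervalIntegral_one_sub_cos_mul_div_sq g hlam₀.ne',
    ← div_eq_mul_inv, intervalIntegral.integral_of_le (by positivity),
    mul_div_mul_left _ _ hlam₀.ne']
  simp_rw [mul_div_assoc']
  exact integral_div _ _

end PotterBound

theorem statement19 (g : ℝ → ℝ) (hgm : Measurable g)
    (hgpos : ∀ x ∈ Set.Ioi (0 : ℝ), 0 < g x)
    (hgbdd : ∀ a b : ℝ, 0 < a → ∃ Cb : ℝ, ∀ x ∈ Set.Icc a b, g x ≤ Cb)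
    (hslow : ∀ c : ℝ, 0 < c →
      Tendsto (fun x => g (c * x) / g x) atTop (nhds 1))
    (hint : IntegrableOn g (Set.Ioo 0 1)) :
    Tendsto (fun lam =>
        (∫ x in Set.Ioi (0 : ℝ), (1 - Real.cos (lam * x)) * g (1 / x) / x ^ 2) /
          (lam * g lam))
      atTop (nhds (Real.pi / 2)) := by
  obtain ⟨X, hX, hP⟩ := SlowlyVarying.exists_potterBound hslow hgm hgpos one_half_pos
  have hδ : |(1 / 2 : ℝ)| < 1 := by norm_num [abs_of_pos]
  have hφ : IntegrableOn (fun x => g (1 / x) / x ^ 2) (Ioi X⁻¹) :=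
    (integrableOn_Ioo_zero_of_bounded hgm hgpos hgbdd hint X).comp_one_div_div_sq hX
  have hφ₀ : ∀ x ∈ Ioi X⁻¹, 0 ≤ g (1 / x) / x ^ 2 := fun x hx =>
    div_nonneg (hgpos _ (one_div_pos.2 ((inv_pos.2 hX).trans hx))).le (sq_nonneg x)
  have hgrowth : Tendsto (fun lam => lam * g lam) atTop atTop := by
    simpa using SlowlyVarying.tendsto_rpow_mul_atTop hslow hgm hgpos one_pos
  have hhead := hP.tendsto_intervalIntegral_div hX hslow hgm hgpos hδ
  have htail := tendsto_setIntegral_one_sub_cos_mul_div_atTop measurableSet_Ioi hφ hφ₀ hgrowth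
  simp only [← mul_div_assoc] at htail
  rw [← add_zero (π / 2)]
  refine (hhead.add htail).congr' ?_
  filter_upwards [eventually_ge_atTop X] with lam hlam
  rw [← add_div, intervalIntegral.integral_interval_add_Ioi'
    (hP.intervalIntegrable hX hgm hgpos hδ hlam)]
  simpa only [← mul_div_assoc] using hφ.one_sub_cos_mul lam
end
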